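/- Let r ≥ 2 and n, k, ℓ be naturals with ℓ ≤ k ≤ n, and let ε > 0 with e(k-ℓ)/(n-ℓ) ≤ n^{-ε}. Then for every fixed δ with 0 < δ < ε and t = e⁻¹(r-1)(δ ln n)^{1/(r-1)} - ℓ, the sum ∑_{v=1}^{⌊t⌋} C(n-ℓ, v) · 2^{C(v+ℓ,r) - C(ℓ,r)} · (v(k-ℓ)/(n-ℓ)²)^v is at most 2^{C(ℓ, r-1)} · n^{-ε}/(1 - n^{-ε+δ}), for sufficiently large n. -/

import Mathlib

/-!
Write `s = r - 1`. By the bound `C(M, j) ≤ (e M / j) ^ j`, the factor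
`C(n - ℓ, v) (v (k - ℓ) / (n - ℓ)²) ^ v` is at most `(e (k - ℓ) / (n - ℓ)) ^ v ≤ n ^ (-ε v)`.
By the hockey-stick identity the exponent `C(v + ℓ, r) - C(ℓ, r)` equals
`C(ℓ, s) + ∑_{1 ≤ i < v} C(ℓ + i, s)`, and the same binomial bound gives `C(ℓ + i, s) ≤ δ log n`
as long as `ℓ + i ≤ ℓ + t = s (δ log n) ^ (1 / s) / e`. Since `2 ≤ e`, the power of two is then at
most `2 ^ C(ℓ, s) n ^ (δ (v - 1))`, so the `v`-th summand is at most
`2 ^ C(ℓ, s) n ^ (-ε) (n ^ (-ε + δ)) ^ (v - 1)`, and a geometric series bounds the sum.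
-/

open Finset Real

namespace Nat

theorem cast_choose_mul_pow_self_le (M s : ℕ) : (M.choose s : ℝ) * s ^ s ≤ (exp 1 * M) ^ s := by
  have hfactorial : (s : ℝ) ^ s ≤ exp 1 ^ s * s ! := by
    rw [exp_one_pow, ← div_le_iff₀ (by positivity)]
    exact Real.pow_div_factorial_le_exp _ (cast_nonneg s) s
  calc (M.choose s : ℝ) * s ^ s ≤ (M ^ s / s !) * (exp 1 ^ s * s !) :=
        mul_le_mul (choose_le_pow_div s M) hfactorial (by positivity) (by positivity)
    _ = (exp 1 * M) ^ s := by rw [mul_pow]; field_simp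

theorem cast_choose_le_pow_of_le {m s : ℕ} (hs : s ≠ 0) {X : ℝ}
    (hm : (m : ℝ) ≤ (exp 1)⁻¹ * s * X) : (m.choose s : ℝ) ≤ X ^ s := by
  have hs' : (0 : ℝ) < s := by positivity
  have hem : exp 1 * m ≤ s * X := by
    calc exp 1 * m ≤ exp 1 * ((exp 1)⁻¹ * s * X) := by gcongr
      _ = s * X := by field_simp
  refine le_of_mul_le_mul_right ?_ (pow_pos hs' s)
  calc (m.choose s : ℝ) * s ^ s ≤ (exp 1 * m) ^ s := cast_choose_mul_pow_self_le m s
    _ ≤ (s * X) ^ s := by gcongr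
    _ = X ^ s * s ^ s := by ring

theorem cast_choose_le_of_mem_Ico {s : ℕ} (hs : s ≠ 0) {y : ℝ} (hy : 0 ≤ y) {ℓ v i : ℕ}
    (hv : v ∈ Icc 1 ⌊(exp 1)⁻¹ * s * y ^ (s : ℝ)⁻¹ - ℓ⌋₊) (hi : i ∈ Ico 1 v) :
    ((ℓ + i).choose s : ℝ) ≤ y := by
  obtain ⟨hv₁, hvt⟩ := mem_Icc.mp hv
  rw [Nat.le_floor_iff' (by omega)] at hvt
  have hiv : (i : ℝ) ≤ v := by exact_mod_cast (mem_Ico.mp hi).2.le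
  rw [← rpow_inv_natCast_pow hy hs]
  exact cast_choose_le_pow_of_le hs (by push_cast; linarith)

theorem cast_choose_mul_pow_div_sq_le (M v : ℕ) {c : ℝ} (hc : 0 ≤ c) :
    (M.choose v : ℝ) * (v * c / M ^ 2) ^ v ≤ (exp 1 * c / M) ^ v := by
  have hM : exp 1 * M * (c / M ^ 2) = exp 1 * c / M := by
    rcases eq_or_ne (M : ℝ) 0 with h | h
    · simp [h]
    · field_simp
  calc (M.choose v : ℝ) * (v * c / M ^ 2) ^ v = (M.choose v * v ^ v) * (c / M ^ 2) ^ v := by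
        rw [mul_div_assoc, mul_pow]; ring
    _ ≤ (exp 1 * M) ^ v * (c / M ^ 2) ^ v := by
        gcongr
        exact cast_choose_mul_pow_self_le M v
    _ = (exp 1 * c / M) ^ v := by rw [← mul_pow, hM]

theorem add_choose_succ_eq (ℓ s v : ℕ) :
    (v + ℓ).choose (s + 1) = ℓ.choose (s + 1) + ∑ i ∈ range v, (ℓ + i).choose s := by
  induction v with
  | zero => simp
  | succ v ih =>
    rw [add_right_comm, choose_succ_succ, ih, sum_range_succ, add_comm v ℓ]
    ring

theorem two_pow_add_choose_succ_sub_le (ℓ s v : ℕ) {L : ℝ}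
    (hL : ∀ i ∈ Ico 1 v, ((ℓ + i).choose s : ℝ) ≤ L) :
    (2 : ℝ) ^ ((v + ℓ).choose (s + 1) - ℓ.choose (s + 1)) ≤ 2 ^ ℓ.choose s * exp L ^ (v - 1) := by
  rcases v with _ | w
  · simp [one_le_pow₀ (one_le_two : (1 : ℝ) ≤ 2)]
  set S := ∑ i ∈ range w, (ℓ + (i + 1)).choose s
  have hexponent : (w + 1 + ℓ).choose (s + 1) - ℓ.choose (s + 1) = ℓ.choose s + S := by
    rw [add_choose_succ_eq, sum_range_succ', add_zero]
    omega
  have hS : (S : ℝ) ≤ w * L := by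
    calc (S : ℝ) = ∑ i ∈ range w, ((ℓ + (i + 1)).choose s : ℝ) := by push_cast [S]; rfl
      _ ≤ ∑ _i ∈ range w, L :=
          sum_le_sum fun i hi => hL (i + 1) (by simp only [mem_Ico, mem_range] at hi ⊢; omega)
      _ = w * L := by simp
  rw [hexponent, pow_add, add_tsub_cancel_right]
  gcongr
  calc (2 : ℝ) ^ S ≤ exp 1 ^ S := by
        gcongr
        linarith [add_one_le_exp (1 : ℝ)]
    _ = exp S := exp_one_pow S
    _ ≤ exp (w * L) := exp_le_exp.mpr hS
    _ = exp L ^ w := by rw [← exp_nat_mul]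

end Nat

theorem sum_Icc_one_pow_sub_one_le {x : ℝ} (hx₀ : 0 ≤ x) (hx₁ : x < 1) (T : ℕ) :
    ∑ v ∈ Icc 1 T, x ^ (v - 1) ≤ 1 / (1 - x) := by
  have hreindex : ∑ v ∈ Icc 1 T, x ^ (v - 1) = ∑ i ∈ Ico 0 T, x ^ i := by
    rw [← Ico_add_one_right_eq_Icc, sum_Ico_eq_sum_range, range_eq_Ico]
    simp
  simpa [hreindex] using geom_sum_Ico_le_of_lt_one (m := 0) (n := T) hx₀ hx₁

theorem choose_mul_two_pow_mul_pow_le {n k ℓ s v : ℕ} (hℓk : ℓ ≤ k) (hℓn : ℓ ≤ n) (hv : v ≠ 0)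
    {p L : ℝ} (hp : exp 1 * ((k : ℝ) - ℓ) / ((n : ℝ) - ℓ) ≤ p)
    (hL : ∀ i ∈ Ico 1 v, ((ℓ + i).choose s : ℝ) ≤ L) :
    ((n - ℓ).choose v : ℝ) * 2 ^ ((v + ℓ).choose (s + 1) - ℓ.choose (s + 1)) *
        ((v : ℝ) * ((k : ℝ) - ℓ) / ((n : ℝ) - ℓ) ^ 2) ^ v
      ≤ 2 ^ ℓ.choose s * p * (p * exp L) ^ (v - 1) := by
  have hc : (0 : ℝ) ≤ (k : ℝ) - ℓ := sub_nonneg.mpr (by exact_mod_cast hℓk)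
  have hratio : 0 ≤ exp 1 * ((k : ℝ) - ℓ) / ((n : ℝ) - ℓ) :=
    div_nonneg (mul_nonneg (exp_pos 1).le hc) (sub_nonneg.mpr (by exact_mod_cast hℓn))
  have hp₀ : 0 ≤ p := hratio.trans hp
  have hprob : ((n - ℓ).choose v : ℝ) * ((v : ℝ) * ((k : ℝ) - ℓ) / ((n : ℝ) - ℓ) ^ 2) ^ v
      ≤ p ^ v := by
    have h := Nat.cast_choose_mul_pow_div_sq_le (n - ℓ) v hc
    rw [Nat.cast_sub hℓn] at h
    exact h.trans (pow_le_pow_left₀ hratio hp v)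
  obtain ⟨w, rfl⟩ := Nat.exists_eq_succ_of_ne_zero hv
  rw [mul_right_comm]
  calc _ ≤ p ^ (w + 1) * (2 ^ ℓ.choose s * exp L ^ w) :=
        mul_le_mul hprob (Nat.two_pow_add_choose_succ_sub_le ℓ s (w + 1) hL) (by positivity)
          (by positivity)
    _ = _ := by rw [Nat.succ_sub_one, mul_pow, pow_succ]; ring

theorem low_part_sum_bound (r : ℕ) (hr : 2 ≤ r) (ε δ : ℝ) (hδ : 0 < δ) (hδε : δ < ε) :
    ∃ N : ℕ, ∀ n ≥ N, ∀ k ℓ : ℕ, ℓ ≤ k → k ≤ n →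
      Real.exp 1 * ((k : ℝ) - ℓ) / ((n : ℝ) - ℓ) ≤ (n : ℝ) ^ (-ε) →
      ∑ v ∈ Finset.Icc 1
          (⌊(Real.exp 1)⁻¹ * ((r : ℝ) - 1) *
              (δ * Real.log n) ^ ((1 : ℝ) / ((r : ℝ) - 1)) - ℓ⌋₊),
        ((n - ℓ).choose v : ℝ) * 2 ^ ((v + ℓ).choose r - ℓ.choose r) *
          ((v : ℝ) * ((k : ℝ) - ℓ) / ((n : ℝ) - ℓ) ^ 2) ^ v
      ≤ 2 ^ (ℓ.choose (r - 1)) * (n : ℝ) ^ (-ε) / (1 - (n : ℝ) ^ (-ε + δ)) := by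
  refine ⟨2, fun n hn k ℓ hℓk hkn hp => ?_⟩
  obtain ⟨s, rfl⟩ : ∃ s, r = s + 1 := ⟨r - 1, by omega⟩
  have hcast : ((s + 1 : ℕ) : ℝ) - 1 = s := by push_cast; ring
  rw [hcast, one_div, Nat.add_sub_cancel]
  have hn₁ : (1 : ℝ) < n := by exact_mod_cast hn
  have hn₀ : (0 : ℝ) < n := one_pos.trans hn₁
  have hlog : 0 ≤ δ * log n := mul_nonneg hδ.le (log_pos hn₁).le
  have hx : n ^ (-ε) * exp (δ * log n) = (n : ℝ) ^ (-ε + δ) := by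
    rw [rpow_add hn₀, rpow_def_of_pos hn₀ δ, mul_comm δ]
  have hx₁ : (n : ℝ) ^ (-ε + δ) < 1 := rpow_lt_one_of_one_lt_of_neg hn₁ (by linarith)
  calc _ ≤ ∑ v ∈ Icc 1 _, 2 ^ ℓ.choose s * n ^ (-ε) * ((n : ℝ) ^ (-ε + δ)) ^ (v - 1) :=
        sum_le_sum fun v hv =>
          (choose_mul_two_pow_mul_pow_le hℓk (hℓk.trans hkn)
            (Nat.one_le_iff_ne_zero.mp (mem_Icc.mp hv).1) hp
            fun i hi => Nat.cast_choose_le_of_mem_Ico (by omega) hlog hv hi).trans_eq (by rw [hx])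
    _ = 2 ^ ℓ.choose s * n ^ (-ε) * ∑ v ∈ Icc 1 _, ((n : ℝ) ^ (-ε + δ)) ^ (v - 1) := by
        rw [mul_sum]
    _ ≤ 2 ^ ℓ.choose s * n ^ (-ε) * (1 / (1 - (n : ℝ) ^ (-ε + δ))) := by
        gcongr
        exact sum_Icc_one_pow_sub_one_le (by positivity) hx₁ _
    _ = _ := mul_one_div _ _
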